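/- Let {X_n} be a sequence of random variables stochastically dominated by a random variable X with E|X|^p < ∞ for some 0 < p < 2, and let φ: ℝ → ℝ satisfy |φ(x)| ≤ |x| for all x. Then for every r > p, ∑_{n=1}^∞ ∑_{k=1}^n (k^{r/p} (Log n)^r) / (n^{r/p+1} (Log k)^{r²/(r-p)}) · P(|φ(X_k)| > k^{1/p} / (Log k)^{r/(r-p)}) < ∞. -/

import Mathlib

open MeasureTheory Filter

noncomputable def Log (x : ℝ) : ℝ := Real.log (max x (Real.exp 1))

/-!
After exchanging the sums, the inner sum runs over `n ≥ k`. Since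
`Log n ≤ Log k · (1 + log (n / k))` grows more slowly than any power of `n / k`, the tail
`∑_{n ≥ k} (Log n)^r / n^(r/p+1)` is `O((Log k)^r k^(-r/p))`. So the double series is bounded by
`∑_k (Log k)^(-q) P(|φ(X_k)| > t_k)` with `q = pr/(r-p)`, and, by `|φ x| ≤ |x|` and domination,
by the same sum for `X`, i.e. `E ∑_k (Log k)^(-q) 1{t_k < |X|}`. The event `t_k < x` means
`k < x^p (Log k)^q`, which forces `Log k = O(Log x)`; splitting at `k = x^p` bounds the inner sum
by `O(x^p)`, so the whole series is `O(E|X|^p)`.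
-/

open Real Finset

lemma Log_of_le_exp_one {x : ℝ} (h : x ≤ exp 1) : Log x = 1 := by
  rw [Log, max_eq_right h, log_exp]

lemma Log_of_exp_one_le {x : ℝ} (h : exp 1 ≤ x) : Log x = log x := by
  rw [Log, max_eq_left h]

lemma Log_one : Log 1 = 1 :=
  Log_of_le_exp_one (by linarith [add_one_le_exp (1 : ℝ)])

lemma one_le_Log (x : ℝ) : 1 ≤ Log x := by
  simpa [Log] using log_le_log (exp_pos 1) (le_max_right x (exp 1))

lemma Log_pos (x : ℝ) : 0 < Log x := one_pos.trans_le (one_le_Log x)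

lemma Log_mono : Monotone Log := fun _ _ h =>
  log_le_log ((exp_pos 1).trans_le (le_max_right _ _)) (max_le_max h le_rfl)

lemma log_le_Log {x : ℝ} (hx : 0 ≤ x) : log x ≤ Log x := by
  rcases hx.eq_or_lt with rfl | hx
  · simpa using (Log_pos 0).le
  · exact log_le_log hx (le_max_left _ _)

lemma Log_mul_le {x y : ℝ} (hx : 0 ≤ x) (hy : 0 ≤ y) : Log (x * y) ≤ Log x + Log y := by
  rcases le_total (x * y) (exp 1) with h | h
  · rw [Log_of_le_exp_one h]; linarith [one_le_Log x, Log_pos y]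
  · have hxy : 0 < x * y := (exp_pos 1).trans_le h
    rw [Log_of_exp_one_le h, log_mul (left_ne_zero_of_mul hxy.ne') (right_ne_zero_of_mul hxy.ne')]
    exact add_le_add (log_le_Log hx) (log_le_Log hy)

lemma Log_le_Log_add_log_div {x y : ℝ} (hx : 0 < x) (hxy : x ≤ y) :
    Log y ≤ Log x + log (y / x) := by
  have hlog : 0 ≤ log (y / x) := log_nonneg ((one_le_div hx).mpr hxy)
  rcases le_total y (exp 1) with h | h
  · rw [Log_of_le_exp_one h]; linarith [one_le_Log x]
  · rw [Log_of_exp_one_le h, log_div (hx.trans_le hxy).ne' hx.ne']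
    linarith [log_le_Log hx.le]

lemma one_add_log_le_rpow {z δ : ℝ} (hz : 1 ≤ z) (hδ : 0 < δ) :
    1 + log z ≤ (1 + 1 / δ) * z ^ δ := by
  have h1 : log z ≤ z ^ δ / δ := log_le_rpow_div (zero_le_one.trans hz) hδ
  have h2 : 1 ≤ z ^ δ := one_le_rpow hz hδ.le
  rw [add_mul, one_mul, one_div_mul_eq_div]
  linarith

lemma Log_le_mul_Log_mul_div_rpow {x y δ : ℝ} (hx : 0 < x) (hxy : x ≤ y) (hδ : 0 < δ) :
    Log y ≤ (1 + 1 / δ) * Log x * (y / x) ^ δ := by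
  calc Log y ≤ Log x + log (y / x) := Log_le_Log_add_log_div hx hxy
    _ ≤ Log x * (1 + log (y / x)) := by
      nlinarith [one_le_Log x, log_nonneg ((one_le_div hx).mpr hxy)]
    _ ≤ Log x * ((1 + 1 / δ) * (y / x) ^ δ) :=
      mul_le_mul_of_nonneg_left (one_add_log_le_rpow ((one_le_div hx).mpr hxy) hδ) (Log_pos x).le
    _ = (1 + 1 / δ) * Log x * (y / x) ^ δ := by ring

lemma Log_le_rpow {x δ : ℝ} (hx : 1 ≤ x) (hδ : 0 < δ) : Log x ≤ (1 + 1 / δ) * x ^ δ := by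
  simpa [Log_one] using Log_le_mul_Log_mul_div_rpow one_pos hx hδ

lemma sum_Ico_rpow_neg_le {τ : ℝ} (hτ : 0 < τ) {k : ℕ} (hk : 1 ≤ k) (N : ℕ) :
    ∑ n ∈ Ico k N, (n : ℝ) ^ (-(1 + τ)) ≤ (1 + 1 / τ) * (k : ℝ) ^ (-τ) := by
  have hk0 : (0 : ℝ) < k := by exact_mod_cast hk
  have hexp : -(1 + τ) < -1 := by linarith
  rcases le_or_gt N k with hN | hN
  · rw [Ico_eq_empty_of_le hN, sum_empty]; positivity
  have hanti : AntitoneOn (fun x : ℝ => x ^ (-(1 + τ))) (Set.Icc (k : ℝ) (N - 1 : ℕ)) :=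
    fun x hx y _ hxy => rpow_le_rpow_of_nonpos (hk0.trans_le hx.1) hxy (by linarith)
  have htail : ∑ n ∈ Ico k (N - 1), ((n + 1 : ℕ) : ℝ) ^ (-(1 + τ)) ≤ (k : ℝ) ^ (-τ) / τ := by
    refine (hanti.sum_Ico_le_integral (integrableOn_Ioi_rpow_of_lt hexp hk0)
      fun t ht => (rpow_pos_of_pos (hk0.trans ht) _).le).trans_eq ?_
    rw [integral_Ioi_rpow_of_lt hexp hk0]
    ring_nf
  have hfirst : (k : ℝ) ^ (-(1 + τ)) ≤ (k : ℝ) ^ (-τ) :=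
    rpow_le_rpow_of_exponent_le (by exact_mod_cast hk) (by linarith)
  rw [sum_eq_sum_Ico_succ_bot hN, ← Nat.sub_add_cancel (hk.trans hN.le), ← sum_Ico_add']
  calc _ ≤ (k : ℝ) ^ (-τ) + (k : ℝ) ^ (-τ) / τ := add_le_add hfirst (by exact_mod_cast htail)
    _ = _ := by ring

lemma Log_rpow_div_rpow_le {r s x y : ℝ} (hr : 0 < r) (hs : 0 < s) (hx : 0 < x) (hxy : x ≤ y) :
    Log y ^ r / y ^ (s + 1) ≤
      (1 + 2 * r / s) ^ r * Log x ^ r * x ^ (-(s / 2)) * y ^ (-(1 + s / 2)) := by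
  have hy : 0 < y := hx.trans_le hxy
  have hδ : 0 < s / (2 * r) := by positivity
  have hLog := Log_le_mul_Log_mul_div_rpow hx hxy hδ
  have hc : 1 + 1 / (s / (2 * r)) = 1 + 2 * r / s := by field_simp
  rw [hc] at hLog
  calc Log y ^ r / y ^ (s + 1)
      ≤ ((1 + 2 * r / s) * Log x * (y / x) ^ (s / (2 * r))) ^ r / y ^ (s + 1) := by
        gcongr; exact (Log_pos y).le
    _ = (1 + 2 * r / s) ^ r * Log x ^ r * (y ^ (s / 2) / x ^ (s / 2)) / y ^ (s + 1) := by
        have := (Log_pos x).le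
        rw [mul_rpow (by positivity) (by positivity), mul_rpow (by positivity) this,
          ← rpow_mul (by positivity), div_rpow hy.le hx.le,
          show s / (2 * r) * r = s / 2 by field_simp]
    _ = (1 + 2 * r / s) ^ r * Log x ^ r * x ^ (-(s / 2)) * y ^ (-(1 + s / 2)) := by
        rw [rpow_neg hx.le, show -(1 + s / 2) = s / 2 - (s + 1) by ring, rpow_sub hy]
        field_simp

lemma sum_Ico_Log_rpow_div_rpow_le {r s : ℝ} (hr : 0 < r) (hs : 0 < s) {k : ℕ} (hk : 1 ≤ k)
    (N : ℕ) :
    ∑ n ∈ Ico k N, Log n ^ r / (n : ℝ) ^ (s + 1) ≤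
      (1 + 2 * r / s) ^ r * (1 + 2 / s) * Log k ^ r * (k : ℝ) ^ (-s) := by
  have hk0 : (0 : ℝ) < k := by exact_mod_cast hk
  set c := (1 + 2 * r / s) ^ r * Log k ^ r * (k : ℝ) ^ (-(s / 2))
  calc ∑ n ∈ Ico k N, Log n ^ r / (n : ℝ) ^ (s + 1)
      ≤ ∑ n ∈ Ico k N, c * (n : ℝ) ^ (-(1 + s / 2)) :=
        sum_le_sum fun n hn =>
          Log_rpow_div_rpow_le hr hs hk0 (by exact_mod_cast (mem_Ico.mp hn).1)
    _ ≤ c * ((1 + 1 / (s / 2)) * (k : ℝ) ^ (-(s / 2))) := by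
        rw [← mul_sum]
        have := (Log_pos k).le
        exact mul_le_mul_of_nonneg_left (sum_Ico_rpow_neg_le (by positivity) hk N)
          (by positivity)
    _ = (1 + 2 * r / s) ^ r * (1 + 2 / s) * Log k ^ r * (k : ℝ) ^ (-s) := by
        have hsq : (k : ℝ) ^ (-(s / 2)) * (k : ℝ) ^ (-(s / 2)) = (k : ℝ) ^ (-s) := by
          rw [← rpow_add hk0]; ring_nf
        rw [one_div_div]
        linear_combination (1 + 2 * r / s) ^ r * (1 + 2 / s) * Log k ^ r * hsq

lemma sum_Ico_rpow_mul_Log_rpow_div_le {p r : ℝ} (hp : 0 < p) (hpr : p < r) :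
    ∃ D, 0 ≤ D ∧ ∀ k : ℕ, 1 ≤ k → ∀ N : ℕ,
      ∑ n ∈ Ico k N,
          (k : ℝ) ^ (r / p) * Log n ^ r / ((n : ℝ) ^ (r / p + 1) * Log k ^ (r ^ 2 / (r - p)))
        ≤ D * Log k ^ (-(p * (r / (r - p)))) := by
  have hr : 0 < r := hp.trans hpr
  have hs : 0 < r / p := div_pos hr hp
  refine ⟨(1 + 2 * r / (r / p)) ^ r * (1 + 2 / (r / p)), by positivity, fun k hk N => ?_⟩
  have hk0 : (0 : ℝ) < k := by exact_mod_cast hk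
  have hL := Log_pos k
  have hpow : (k : ℝ) ^ (r / p) * (k : ℝ) ^ (-(r / p)) = 1 := by
    rw [← rpow_add hk0, add_neg_cancel, rpow_zero]
  have hLog : Log k ^ r / Log k ^ (r ^ 2 / (r - p)) = Log k ^ (-(p * (r / (r - p)))) := by
    rw [← rpow_sub hL]
    congr 1
    field_simp [(sub_pos.mpr hpr).ne']
    ring
  calc ∑ n ∈ Ico k N, (k : ℝ) ^ (r / p) * Log n ^ r /
          ((n : ℝ) ^ (r / p + 1) * Log k ^ (r ^ 2 / (r - p)))
      = (k : ℝ) ^ (r / p) / Log k ^ (r ^ 2 / (r - p)) *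
          ∑ n ∈ Ico k N, Log n ^ r / (n : ℝ) ^ (r / p + 1) := by
        rw [mul_sum]; congr! 1 with n; ring
    _ ≤ (k : ℝ) ^ (r / p) / Log k ^ (r ^ 2 / (r - p)) *
          ((1 + 2 * r / (r / p)) ^ r * (1 + 2 / (r / p)) * Log k ^ r * (k : ℝ) ^ (-(r / p))) :=
        mul_le_mul_of_nonneg_left (sum_Ico_Log_rpow_div_rpow_le hr hs hk N) (by positivity)
    _ = _ := by
        rw [← hLog]
        field_simp
        linear_combination hpow

lemma Log_le_mul_Log_of_lt_mul_Log_rpow {q : ℝ} (hq : 0 < q) :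
    ∃ A, 0 ≤ A ∧ ∀ x y : ℝ, 1 ≤ x → 0 ≤ y → x < y * Log x ^ q → Log x ≤ A * Log y := by
  set M := (1 + 2 * q) ^ q
  refine ⟨2 * (1 + Log M), by linarith [Log_pos M], fun x y hx hy hxy => ?_⟩
  have hx0 : 0 < x := one_pos.trans_le hx
  have hsqrt : 0 < √x := sqrt_pos.mpr hx0
  have hLog_sqrt : Log x ^ q ≤ M * √x := by
    have h := Log_le_rpow hx (show 0 < 1 / (2 * q) by positivity)
    rw [one_div_one_div] at h
    calc Log x ^ q ≤ ((1 + 2 * q) * x ^ (1 / (2 * q))) ^ q :=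
          rpow_le_rpow (Log_pos x).le h hq.le
      _ = M * √x := by
          rw [mul_rpow (by positivity) (by positivity), ← rpow_mul hx0.le, sqrt_eq_rpow]
          field_simp
          rfl
  -- `(Log x)^q ≤ M √x` turns `x < y (Log x)^q` into `x < (M y)^2`.
  have hsqrt_lt : √x < y * M := by
    have : √x * √x < y * M * √x := by
      rw [mul_self_sqrt hx0.le]
      calc x < y * Log x ^ q := hxy
        _ ≤ y * (M * √x) := mul_le_mul_of_nonneg_left hLog_sqrt hy
        _ = y * M * √x := by ring
    exact lt_of_mul_lt_mul_right this hsqrt.le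
  have hM : 0 ≤ M := by positivity
  calc Log x ≤ Log ((y * M) * (y * M)) := by
        apply Log_mono
        rw [← mul_self_sqrt hx0.le]
        exact mul_self_le_mul_self hsqrt.le hsqrt_lt.le
    _ ≤ (Log y + Log M) + (Log y + Log M) :=
        (Log_mul_le (by positivity) (by positivity)).trans
          (add_le_add (Log_mul_le hy hM) (Log_mul_le hy hM))
    _ ≤ 2 * (1 + Log M) * Log y := by nlinarith [one_le_Log y, Log_pos M]

lemma sum_le_mul_of_natCast_le {s : Finset ℕ} {f : ℕ → ℝ} {z c : ℝ} (hz : 0 ≤ z) (hc : 0 ≤ c)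
    (hs : ∀ k ∈ s, 1 ≤ k ∧ (k : ℝ) ≤ z) (hf : ∀ k ∈ s, f k ≤ c) : ∑ k ∈ s, f k ≤ z * c := by
  have hcard : (s.card : ℝ) ≤ z := by
    have hsub : s ⊆ Icc 1 ⌊z⌋₊ := fun k hk =>
      mem_Icc.mpr ⟨(hs k hk).1, Nat.le_floor (hs k hk).2⟩
    calc (s.card : ℝ) ≤ ⌊z⌋₊ := by
          exact_mod_cast (card_le_card hsub).trans (by simp)
      _ ≤ z := Nat.floor_le hz
  calc ∑ k ∈ s, f k ≤ s.card • c := sum_le_card_nsmul s f c hf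
    _ ≤ z * c := by rw [nsmul_eq_mul]; exact mul_le_mul_of_nonneg_right hcard hc

lemma sum_filter_Log_rpow_neg_le {q : ℝ} (hq : 0 < q) :
    ∃ B, ∀ y : ℝ, 0 ≤ y → ∀ K : ℕ,
      ∑ k ∈ Icc 1 K with ((k : ℕ) : ℝ) < y * Log k ^ q, Log k ^ (-q) ≤ B * y := by
  obtain ⟨A, hA0, hA⟩ := Log_le_mul_Log_of_lt_mul_Log_rpow hq
  refine ⟨1 + A ^ q, fun y hy K => ?_⟩
  have hLy := Log_pos y
  set s := {k ∈ Icc 1 K | ((k : ℕ) : ℝ) < y * Log k ^ q}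
  -- At most `y` terms `k ≤ y`, each `≤ 1`; the terms `k > y` are `≤ (Log y)^(-q)`, and there are
  -- at most `y (A Log y)^q` of them.
  have hmem : ∀ k ∈ s, 1 ≤ k ∧ (k : ℝ) < y * Log k ^ q := fun k hk => by
    simp only [s, mem_filter, mem_Icc] at hk; exact ⟨hk.1.1, hk.2⟩
  have hsmall : ∑ k ∈ s with ((k : ℕ) : ℝ) ≤ y, Log k ^ (-q) ≤ y * 1 := by
    refine sum_le_mul_of_natCast_le hy zero_le_one (fun k hk => ?_) (fun k _ => ?_)
    · simp only [mem_filter] at hk; exact ⟨(hmem k hk.1).1, hk.2⟩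
    · exact rpow_le_one_of_one_le_of_nonpos (one_le_Log k) (by linarith)
  have hlarge : ∑ k ∈ s with ¬((k : ℕ) : ℝ) ≤ y, Log k ^ (-q) ≤
      (y * (A * Log y) ^ q) * Log y ^ (-q) := by
    refine sum_le_mul_of_natCast_le (by positivity) (rpow_pos_of_pos hLy _).le (fun k hk => ?_)
      (fun k hk => ?_) <;> simp only [mem_filter, not_le] at hk
    · obtain ⟨hk1, hk⟩ := hmem k hk.1
      have hLk : Log k ≤ A * Log y := hA k y (by exact_mod_cast hk1) hy hk
      refine ⟨hk1, hk.le.trans (mul_le_mul_of_nonneg_left ?_ hy)⟩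
      exact rpow_le_rpow (Log_pos k).le hLk hq.le
    · exact rpow_le_rpow_of_nonpos hLy (Log_mono hk.2.le) (by linarith)
  calc ∑ k ∈ s, Log k ^ (-q) = _ := (sum_filter_add_sum_filter_not s _ _).symm
    _ ≤ y * 1 + (y * (A * Log y) ^ q) * Log y ^ (-q) := add_le_add hsmall hlarge
    _ = (1 + A ^ q) * y := by
        have hcancel : Log y ^ q * Log y ^ (-q) = 1 := by
          rw [← rpow_add hLy, add_neg_cancel, rpow_zero]
        rw [mul_rpow hA0 hLy.le]
        linear_combination y * A ^ q * hcancel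

lemma rpow_inv_div_Log_rpow_lt_iff {p b a x : ℝ} (hp : 0 < p) (ha : 0 ≤ a) (hx : 0 ≤ x) :
    a ^ (1 / p) / Log a ^ b < x ↔ a < x ^ p * Log a ^ (p * b) := by
  have hL := Log_pos a
  rw [div_lt_iff₀ (rpow_pos_of_pos hL b), ← rpow_lt_rpow_iff (by positivity) (by positivity) hp,
    ← rpow_mul ha, one_div_mul_cancel hp.ne', rpow_one, mul_rpow hx (by positivity),
    ← rpow_mul hL.le, mul_comm b]

lemma sum_mul_measureReal_le_integral {Ω ι : Type*} [MeasurableSpace Ω] {μ : Measure Ω}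
    [IsFiniteMeasure μ] {s : Finset ι} {A : ι → Set Ω} (hA : ∀ i ∈ s, MeasurableSet (A i))
    (w : ι → ℝ) {g : Ω → ℝ} (hg : Integrable g μ)
    (h : ∀ ω, ∑ i ∈ s, (A i).indicator (fun _ => w i) ω ≤ g ω) :
    ∑ i ∈ s, w i * μ.real (A i) ≤ ∫ ω, g ω ∂μ := by
  have hint : ∀ i ∈ s, Integrable ((A i).indicator fun _ => w i) μ :=
    fun i hi => (integrable_const (w i)).indicator (hA i hi)
  calc ∑ i ∈ s, w i * μ.real (A i)
      = ∫ ω, ∑ i ∈ s, (A i).indicator (fun _ => w i) ω ∂μ := by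
        rw [integral_finsetSum s hint]
        refine sum_congr rfl fun i hi => ?_
        rw [integral_indicator_const _ (hA i hi), smul_eq_mul, mul_comm]
    _ ≤ ∫ ω, g ω ∂μ := integral_mono (integrable_finsetSum s hint) hg h

lemma summable_sum_Icc_of_sum_Ico_le {f : ℕ → ℕ → ℝ} {w : ℕ → ℝ} {M : ℝ}
    (hf : ∀ n k, 0 ≤ f n k) (hfw : ∀ k, 1 ≤ k → ∀ N, ∑ n ∈ Ico k N, f n k ≤ w k)
    (hw : ∀ N, ∑ k ∈ Icc 1 N, w k ≤ M) :
    Summable fun n => ∑ k ∈ Icc 1 n, f n k := by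
  refine summable_of_sum_range_le (c := M) (fun n => sum_nonneg fun k _ => hf n k) fun N => ?_
  rw [sum_comm' (t' := Icc 1 N) (s' := fun k => Ico k N) (fun n k => by
    simp only [mem_range, mem_Icc, mem_Ico]; omega)]
  exact (sum_le_sum fun k hk => hfw k (mem_Icc.mp hk).1 N).trans (hw N)

lemma exists_sum_Log_rpow_neg_mul_measureReal_le {Ω : Type*} [MeasurableSpace Ω] (μ : Measure Ω)
    [IsFiniteMeasure μ] {Y : Ω → ℝ} (hY : Measurable Y) {p b : ℝ} (hp : 0 < p) (hb : 0 < b)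
    (hYp : Integrable (fun ω => |Y ω| ^ p) μ) :
    ∃ B, ∀ N : ℕ, ∑ k ∈ Icc 1 N,
      Log k ^ (-(p * b)) * μ.real {ω | (k : ℝ) ^ (1 / p) / Log k ^ b < |Y ω|} ≤
        B * ∫ ω, |Y ω| ^ p ∂μ := by
  obtain ⟨B, hB⟩ := sum_filter_Log_rpow_neg_le (mul_pos hp hb)
  refine ⟨B, fun N => ?_⟩
  rw [← integral_const_mul]
  refine sum_mul_measureReal_le_integral (fun k _ => measurableSet_lt measurable_const hY.abs) _
    (hYp.const_mul B) fun ω => le_of_eq_of_le ?_ (hB _ (rpow_nonneg (abs_nonneg _) p) N)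
  rw [sum_filter]
  refine sum_congr rfl fun k _ => ?_
  simp only [Set.indicator_apply, Set.mem_ofPred_eq,
    rpow_inv_div_Log_rpow_lt_iff hp (Nat.cast_nonneg k) (abs_nonneg _)]

theorem stmt_8_general {Ω : Type*} [MeasurableSpace Ω] (μ : Measure Ω) [IsProbabilityMeasure μ]
    (X : ℕ → Ω → ℝ) (Xd : Ω → ℝ) (hXdm : Measurable Xd)
    (C : ℝ) (hC : 0 < C)
    (hdom : ∀ n : ℕ, ∀ t : ℝ, 0 < t →
      (μ {ω | t < |X n ω|}).toReal ≤ C * (μ {ω | t < |Xd ω|}).toReal)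
    (p : ℝ) (hp0 : 0 < p)
    (hXp : Integrable (fun ω => |Xd ω| ^ p) μ)
    (φ : ℝ → ℝ) (hφ : ∀ x : ℝ, |φ x| ≤ |x|)
    (r : ℝ) (hr : p < r) :
    Summable (fun n : ℕ => ∑ k ∈ Finset.Icc 1 n,
      (k : ℝ) ^ (r / p) * Log n ^ r / ((n : ℝ) ^ (r / p + 1) * Log k ^ (r ^ 2 / (r - p))) *
        (μ {ω | (k : ℝ) ^ (1 / p) / Log k ^ (r / (r - p)) < |φ (X k ω)|}).toReal) := by
  obtain ⟨D, hD0, hD⟩ := sum_Ico_rpow_mul_Log_rpow_div_le hp0 hr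
  obtain ⟨B, hB⟩ := exists_sum_Log_rpow_neg_mul_measureReal_le μ hXdm hp0
    (div_pos (hp0.trans hr) (sub_pos.mpr hr)) hXp
  set q := p * (r / (r - p))
  set t : ℕ → ℝ := fun k => (k : ℝ) ^ (1 / p) / Log k ^ (r / (r - p))
  have hdom_φ : ∀ k, 1 ≤ k →
      μ.real {ω | t k < |φ (X k ω)|} ≤ C * μ.real {ω | t k < |Xd ω|} := fun k hk =>
    (measureReal_mono fun ω hω => lt_of_lt_of_le hω (hφ _)).trans
      (hdom k (t k) (div_pos (rpow_pos_of_pos (by exact_mod_cast hk) _)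
        (rpow_pos_of_pos (Log_pos k) _)))
  refine summable_sum_Icc_of_sum_Ico_le
    (w := fun k => D * C * (Log k ^ (-q) * μ.real {ω | t k < |Xd ω|}))
    (M := D * C * (B * ∫ ω, |Xd ω| ^ p ∂μ)) (fun n k => ?_) (fun k hk N => ?_)
    (fun N => (mul_sum ..).symm.trans_le (mul_le_mul_of_nonneg_left (hB N) (by positivity)))
  · have := Log_pos n; have := Log_pos k
    exact mul_nonneg (by positivity) measureReal_nonneg
  · have := (rpow_pos_of_pos (Log_pos k) (-q)).le
    calc _ = (∑ n ∈ Ico k N, _) * μ.real {ω | t k < |φ (X k ω)|} := (sum_mul ..).symm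
      _ ≤ D * Log k ^ (-q) * μ.real {ω | t k < |φ (X k ω)|} :=
          mul_le_mul_of_nonneg_right (hD k hk N) measureReal_nonneg
      _ ≤ D * Log k ^ (-q) * (C * μ.real {ω | t k < |Xd ω|}) := by gcongr; exact hdom_φ k hk
      _ = _ := by ring

theorem stmt_8 {Ω : Type*} [MeasurableSpace Ω] (μ : Measure Ω) [IsProbabilityMeasure μ]
    (X : ℕ → Ω → ℝ) (Xd : Ω → ℝ) (hXm : ∀ n, Measurable (X n)) (hXdm : Measurable Xd)
    (C : ℝ) (hC : 0 < C)
    (hdom : ∀ n : ℕ, ∀ t : ℝ, 0 < t →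
      (μ {ω | t < |X n ω|}).toReal ≤ C * (μ {ω | t < |Xd ω|}).toReal)
    (p : ℝ) (hp0 : 0 < p) (hp2 : p < 2)
    (hXp : Integrable (fun ω => |Xd ω| ^ p) μ)
    (φ : ℝ → ℝ) (hφm : Measurable φ) (hφ : ∀ x : ℝ, |φ x| ≤ |x|)
    (r : ℝ) (hr : p < r) :
    Summable (fun n : ℕ => ∑ k ∈ Finset.Icc 1 n,
      (k : ℝ) ^ (r / p) * Log n ^ r / ((n : ℝ) ^ (r / p + 1) * Log k ^ (r ^ 2 / (r - p))) *
        (μ {ω | (k : ℝ) ^ (1 / p) / Log k ^ (r / (r - p)) < |φ (X k ω)|}).toReal) :=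
  stmt_8_general μ X Xd hXdm C hC hdom p hp0 hXp φ hφ r hr
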